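/- arXiv:1712.06587 — 2 statements merged into one kernel-verified Lean document; each statement's English description precedes it below -/
import Mathlib

section
/- Asymmetric Lovász local lemma: let A₁,…,A_N be events with dependency graph G (each A_i is mutually independent of the collection of its non-neighbors in G). If there is a function x : {A₁,…,A_N} → [0,1) with Pr(A_i) ≤ x(A_i) · Π_{B ∈ Γ(A_i)} (1 − x(B)) for all i, then Pr(⋂_i A_iᶜ) > 0. -/
/-!
Write `avoiding A S` for the event that none of the `A j`, `j ∈ S`, occurs. By strong induction
on `S` one shows `μ (A i ∩ avoiding A S) ≤ y i * μ (avoiding A S)` for `i ∉ S`: split `S` into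
the neighbours `S₁` of `i` and the rest `S₂`; independence gives
`μ (A i ∩ avoiding A S) ≤ μ (A i) μ (avoiding A S₂)`, while removing the events of `S₁` one at a
time and using the induction hypothesis on each gives
`μ (avoiding A S) ≥ ∏_{j ∈ S₁} (1 - y j) · μ (avoiding A S₂)`, which is at least
`∏_{j ∈ Γ i} (1 - y j) · μ (avoiding A S₂)`. The same peeling applied to all events then yields
`μ (⋂ i, (A i)ᶜ) ≥ ∏ i, (1 - y i) > 0`.
-/

open MeasureTheory ProbabilityTheory MeasurableSpace Finset
open scoped ENNReal

namespace LovaszLocalLemma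

section Avoiding

variable {ι Ω : Type*}

def avoiding (A : ι → Set Ω) (S : Finset ι) : Set Ω := ⋂ j ∈ S, (A j)ᶜ

@[simp]
lemma avoiding_empty (A : ι → Set Ω) : avoiding A ∅ = Set.univ := by
  simp [avoiding]

lemma avoiding_insert [DecidableEq ι] (A : ι → Set Ω) (j : ι) (S : Finset ι) :
    avoiding A (insert j S) = (A j)ᶜ ∩ avoiding A S :=
  Finset.set_biInter_insert j S _

lemma avoiding_anti (A : ι → Set Ω) {S T : Finset ι} (h : S ⊆ T) :
    avoiding A T ⊆ avoiding A S :=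
  Set.biInter_subset_biInter_left h

lemma avoiding_univ [Fintype ι] (A : ι → Set Ω) : avoiding A univ = ⋂ i, (A i)ᶜ := by
  simp [avoiding]

end Avoiding

variable {ι Ω : Type*} [MeasurableSpace Ω] {μ : Measure Ω} {A : ι → Set Ω} {y : ι → ℝ≥0∞}

/-- Avoiding events outside `Γ i ∪ {i}` does not make `A i` more likely. -/
def IsLopsidependencyGraph (μ : Measure Ω) (A : ι → Set Ω) (Γ : ι → Finset ι) : Prop :=
  ∀ i S, i ∉ S → Disjoint S (Γ i) → μ (A i ∩ avoiding A S) ≤ μ (A i) * μ (avoiding A S)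

lemma measure_inter_avoiding_of_indep {E : Set Ω} {T : Set ι} {S : Finset ι}
    (h : Indep (generateFrom {E}) (generateFrom (A '' T)) μ) (hS : ↑S ⊆ T) :
    μ (E ∩ avoiding A S) = μ E * μ (avoiding A S) := by
  refine (Indep_iff _ _ μ).1 h _ _ (measurableSet_generateFrom rfl) ?_
  exact MeasurableSet.biInter S.countable_toSet fun j hj =>
    (measurableSet_generateFrom (Set.mem_image_of_mem A (hS hj))).compl

lemma one_sub_mul_measure_le_measure_compl_inter [IsFiniteMeasure μ] {E F : Set Ω} {p : ℝ≥0∞}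
    (h : μ (E ∩ F) ≤ p * μ F) : (1 - p) * μ F ≤ μ (Eᶜ ∩ F) :=
  calc (1 - p) * μ F = μ F - p * μ F := by
        rw [ENNReal.sub_mul fun _ _ => measure_ne_top μ F, one_mul]
    _ ≤ μ F - μ (E ∩ F) := tsub_le_tsub_left h _
    _ ≤ μ (F \ (E ∩ F)) := le_measure_sdiff
    _ = μ (Eᶜ ∩ F) := by rw [Set.sdiff_inter_self_eq_sdiff, Set.sdiff_eq_compl_inter]

variable [DecidableEq ι]

lemma prod_one_sub_mul_measure_avoiding_le [IsFiniteMeasure μ] {S T : Finset ι}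
    (hST : Disjoint S T)
    (hcond : ∀ j ∈ T, ∀ U ⊆ S ∪ T, j ∉ U → μ (A j ∩ avoiding A U) ≤ y j * μ (avoiding A U)) :
    (∏ j ∈ T, (1 - y j)) * μ (avoiding A S) ≤ μ (avoiding A (S ∪ T)) := by
  induction T using Finset.induction_on with
  | empty => simp
  | insert j T hjT ih =>
    rw [disjoint_insert_right] at hST
    have hjST : j ∉ S ∪ T := by simp [hST.1, hjT]
    have hsub : S ∪ T ⊆ S ∪ insert j T := union_subset_union_right (subset_insert j T)
    calc (∏ k ∈ insert j T, (1 - y k)) * μ (avoiding A S)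
        = (1 - y j) * ((∏ k ∈ T, (1 - y k)) * μ (avoiding A S)) := by
          rw [prod_insert hjT, mul_assoc]
      _ ≤ (1 - y j) * μ (avoiding A (S ∪ T)) := by
          gcongr
          exact ih hST.2 fun k hk U hU => hcond k (mem_insert_of_mem hk) U (hU.trans hsub)
      _ ≤ μ ((A j)ᶜ ∩ avoiding A (S ∪ T)) :=
          one_sub_mul_measure_le_measure_compl_inter
            (hcond j (mem_insert_self j T) _ hsub hjST)
      _ = μ (avoiding A (S ∪ insert j T)) := by rw [union_insert, avoiding_insert]

variable (Γ : ι → Finset ι)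

theorem measure_inter_avoiding_le [IsFiniteMeasure μ]
    (hΓ : IsLopsidependencyGraph μ A Γ)
    (hbound : ∀ i, μ (A i) ≤ y i * ∏ j ∈ Γ i, (1 - y j)) (S : Finset ι) :
    ∀ i ∉ S, μ (A i ∩ avoiding A S) ≤ y i * μ (avoiding A S) := by
  induction S using Finset.strongInduction with
  | H S ih =>
    intro i hi
    set S₁ := S.filter (· ∈ Γ i)
    set S₂ := S.filter (· ∉ Γ i)
    have hpeel : (∏ j ∈ S₁, (1 - y j)) * μ (avoiding A S₂) ≤ μ (avoiding A S) := by
      have hS : S₂ ∪ S₁ = S := by rw [union_comm, filter_union_filter_not_eq]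
      refine hS ▸ prod_one_sub_mul_measure_avoiding_le (disjoint_filter_filter_not _ _ _).symm ?_
      intro j hj U hU hjU
      exact ih U ((ssubset_iff_of_subset (hS ▸ hU)).2 ⟨j, mem_of_mem_filter j hj, hjU⟩) j hjU
    have hS₁ : S₁ ⊆ Γ i := fun j hj => (mem_filter.1 hj).2
    have hS₂ : Disjoint S₂ (Γ i) := disjoint_left.2 fun j hj => (mem_filter.1 hj).2
    calc μ (A i ∩ avoiding A S) ≤ μ (A i ∩ avoiding A S₂) :=
          measure_mono (Set.inter_subset_inter_right _ (avoiding_anti A (filter_subset _ S)))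
      _ ≤ μ (A i) * μ (avoiding A S₂) := hΓ i S₂ (fun h => hi (mem_of_mem_filter i h)) hS₂
      _ ≤ y i * (∏ j ∈ Γ i, (1 - y j)) * μ (avoiding A S₂) := by gcongr; exact hbound i
      _ ≤ y i * (∏ j ∈ S₁, (1 - y j)) * μ (avoiding A S₂) := by
          gcongr y i * ?_ * _
          exact prod_le_prod_of_subset_of_le_one' hS₁ fun _ _ _ => tsub_le_self
      _ ≤ y i * μ (avoiding A S) := by rw [mul_assoc]; gcongr

theorem prod_one_sub_le_measure_avoiding [IsProbabilityMeasure μ]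
    (hΓ : IsLopsidependencyGraph μ A Γ)
    (hbound : ∀ i, μ (A i) ≤ y i * ∏ j ∈ Γ i, (1 - y j)) (S : Finset ι) :
    ∏ j ∈ S, (1 - y j) ≤ μ (avoiding A S) := by
  simpa using prod_one_sub_mul_measure_avoiding_le (disjoint_empty_left S)
    fun j _ U _ => measure_inter_avoiding_le Γ hΓ hbound U j

theorem measure_iInter_compl_pos [Fintype ι] [IsProbabilityMeasure μ]
    (hΓ : IsLopsidependencyGraph μ A Γ)
    (hbound : ∀ i, μ (A i) ≤ y i * ∏ j ∈ Γ i, (1 - y j)) (hy : ∀ i, y i < 1) :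
    0 < μ (⋂ i, (A i)ᶜ) := by
  rw [← avoiding_univ]
  refine lt_of_lt_of_le ?_ (prod_one_sub_le_measure_avoiding Γ hΓ hbound univ)
  exact CanonicallyOrderedAdd.prod_pos.2 fun i _ => tsub_pos_of_lt (hy i)

end LovaszLocalLemma

lemma ENNReal.ofReal_mul_prod_one_sub {ι : Type*} {a : ℝ} {x : ι → ℝ} {s : Finset ι}
    (ha : 0 ≤ a) (hx0 : ∀ j, 0 ≤ x j) (hx1 : ∀ j, x j ≤ 1) :
    ENNReal.ofReal (a * ∏ j ∈ s, (1 - x j)) =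
      ENNReal.ofReal a * ∏ j ∈ s, (1 - ENNReal.ofReal (x j)) := by
  rw [ENNReal.ofReal_mul ha, ENNReal.ofReal_prod_of_nonneg fun j _ => by linarith [hx1 j]]
  simp_rw [ENNReal.ofReal_sub 1 (hx0 _), ENNReal.ofReal_one]

open LovaszLocalLemma

theorem asymmetric_lovasz_local_lemma_general {Ω : Type*} [MeasurableSpace Ω]
    (μ : Measure Ω) [IsProbabilityMeasure μ] (N : ℕ)
    (A : Fin N → Set Ω)
    (G : SimpleGraph (Fin N)) [DecidableRel G.Adj]
    (hindep : ∀ i : Fin N,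
      Indep (MeasurableSpace.generateFrom {A i})
        (MeasurableSpace.generateFrom (A '' {j | j ≠ i ∧ ¬ G.Adj i j})) μ)
    (x : Fin N → ℝ) (hx0 : ∀ i, 0 ≤ x i) (hx1 : ∀ i, x i < 1)
    (hbound : ∀ i, μ (A i) ≤
      ENNReal.ofReal (x i * ∏ j ∈ G.neighborFinset i, (1 - x j))) :
    0 < μ (⋂ i, (A i)ᶜ) := by
  have hG : IsLopsidependencyGraph μ A (G.neighborFinset ·) := fun i S hiS hdisj =>
    (measure_inter_avoiding_of_indep (hindep i) fun j hj =>
      ⟨ne_of_mem_of_not_mem hj hiS,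
        fun hadj => Finset.disjoint_left.1 hdisj hj ((G.mem_neighborFinset i j).2 hadj)⟩).le
  refine measure_iInter_compl_pos (G.neighborFinset ·) hG (fun i => ?_)
    fun i => ENNReal.ofReal_lt_one.2 (hx1 i)
  rw [← ENNReal.ofReal_mul_prod_one_sub (hx0 i) hx0 fun j => (hx1 j).le]
  exact hbound i

/-- Asymmetric Lovász local lemma.  `G` is a dependency graph for the events `A i`:
each `A i` is independent of the sigma-algebra generated by its non-neighbors.  If there
is a weight function `x : Fin N → [0,1)` with
`Pr(A i) ≤ x i * ∏_{j ∈ Γ(i)} (1 - x j)` for all `i`, then `Pr(⋂ i, (A i)ᶜ) > 0`. -/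
theorem asymmetric_lovasz_local_lemma {Ω : Type*} [MeasurableSpace Ω]
    (μ : Measure Ω) [IsProbabilityMeasure μ] (N : ℕ)
    (A : Fin N → Set Ω) (hA : ∀ i, MeasurableSet (A i))
    (G : SimpleGraph (Fin N)) [DecidableRel G.Adj]
    (hindep : ∀ i : Fin N,
      Indep (MeasurableSpace.generateFrom {A i})
        (MeasurableSpace.generateFrom (A '' {j | j ≠ i ∧ ¬ G.Adj i j})) μ)
    (x : Fin N → ℝ) (hx0 : ∀ i, 0 ≤ x i) (hx1 : ∀ i, x i < 1)
    (hbound : ∀ i, μ (A i) ≤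
      ENNReal.ofReal (x i * ∏ j ∈ G.neighborFinset i, (1 - x j))) :
    0 < μ (⋂ i, (A i)ᶜ) :=
  asymmetric_lovasz_local_lemma_general μ N A G hindep x hx0 hx1 hbound
end

section
/- Symmetric Lovász local lemma: if events A₁,…,A_N each have probability at most p, each A_i is mutually independent of all but at most d of the other events, and e·p·(d+1) ≤ 1, then Pr(⋂_i A_iᶜ) > 0. -/
open MeasureTheory ProbabilityTheory MeasurableSpace Finset
open scoped ENNReal

/-! Write `D_S = ⋂_{j ∈ S} (A j)ᶜ`. By strong induction on `S`, `μ (A i ∩ D_S) ≤ x i * μ D_S`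
whenever `i ∉ S` (a conditional probability bound, stated without dividing by `μ D_S`).
Independence of `A i` from the events outside its neighbourhood `T i` gives
`μ (A i ∩ D_{S \ T i}) = μ (A i) * μ D_{S \ T i}`, and adding the neighbours in `S ∩ T i` back one
at a time, each time using the inductive bound, shrinks `μ D` by at most the factor
`∏_{j ∈ T i} (1 - x j)`. Chaining the bound over all events gives `μ D_univ ≥ ∏ (1 - x i)`.
The symmetric case takes `x i = 1 / (d + 2)`, using `(1 + 1 / (d + 1)) ^ (d + 1) ≤ e`. -/

lemma le_inv_mul_one_sub_inv_pow {p : ℝ} {d : ℕ} (h : Real.exp 1 * p * (d + 1) ≤ 1) :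
    p ≤ ((d : ℝ) + 2)⁻¹ * (1 - ((d : ℝ) + 2)⁻¹) ^ d := by
  have hsub : 1 - ((d : ℝ) + 2)⁻¹ = ((d : ℝ) + 1) / ((d : ℝ) + 2) := by field_simp; ring
  set q : ℝ := (((d : ℝ) + 2) / ((d : ℝ) + 1)) ^ (d + 1)
  have hq : q ≤ Real.exp 1 := by
    convert Real.one_add_inv_pow_le_exp (n := d + 1) using 2
    push_cast; field_simp; ring
  have hmul : ((d : ℝ) + 2)⁻¹ * (((d : ℝ) + 1) / ((d : ℝ) + 2)) ^ d * (((d : ℝ) + 1) * q) = 1 := by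
    simp only [q, div_pow]
    field_simp
    ring
  rw [hsub]
  rcases le_or_gt p 0 with hp | hp
  · exact hp.trans (by positivity)
  refine le_of_mul_le_mul_right ?_ (by positivity : 0 < ((d : ℝ) + 1) * q)
  rw [hmul]
  calc p * ((d + 1) * q) ≤ p * ((d + 1) * Real.exp 1) := by gcongr
    _ ≤ 1 := by linarith

section LocalLemma

variable {Ω ι : Type*} [MeasurableSpace Ω] {μ : Measure Ω} {A : ι → Set Ω}

lemma mul_measure_le_measure_compl_inter [IsFiniteMeasure μ] {B D : Set Ω} {x : ℝ≥0∞}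
    (hB : MeasurableSet B) (h : μ (B ∩ D) ≤ x * μ D) : (1 - x) * μ D ≤ μ (Bᶜ ∩ D) := by
  rw [ENNReal.sub_mul fun _ _ ↦ measure_ne_top μ D, one_mul, tsub_le_iff_right,
    ← Set.sdiff_eq_compl_inter]
  calc μ D = μ (D ∩ B) + μ (D \ B) := (measure_inter_add_sdiff D hB).symm
    _ ≤ μ (D \ B) + x * μ D := by rw [add_comm, Set.inter_comm]; gcongr

variable [DecidableEq ι]

lemma measure_inter_biInter_compl_sdiff_eq_mul {i : ι} {S T : Finset ι} (hi : i ∉ S)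
    (h : Indep (generateFrom {A i}) (generateFrom (A '' {j | j ≠ i ∧ j ∉ T})) μ) :
    μ (A i ∩ ⋂ j ∈ S \ T, (A j)ᶜ) = μ (A i) * μ (⋂ j ∈ S \ T, (A j)ᶜ) := by
  refine (Indep_iff _ _ μ).1 h _ _ (measurableSet_generateFrom rfl) ?_
  refine .biInter (S \ T).countable_toSet fun j hj ↦ .compl ?_
  obtain ⟨hjS, hjT⟩ := mem_sdiff.1 hj
  exact measurableSet_generateFrom ⟨j, ⟨fun hji ↦ hi (hji ▸ hjS), hjT⟩, rfl⟩

variable {x : ι → ℝ≥0∞}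

lemma prod_one_sub_mul_le_measure_biInter_compl [IsFiniteMeasure μ]
    (hA : ∀ i, MeasurableSet (A i)) {W V : Finset ι} (hWV : Disjoint W V)
    (hcond : ∀ U ⊂ W ∪ V, ∀ a ∉ U,
      μ (A a ∩ ⋂ j ∈ U, (A j)ᶜ) ≤ x a * μ (⋂ j ∈ U, (A j)ᶜ)) :
    (∏ j ∈ V, (1 - x j)) * μ (⋂ j ∈ W, (A j)ᶜ) ≤ μ (⋂ j ∈ W ∪ V, (A j)ᶜ) := by
  induction V using Finset.induction_on with
  | empty => simp
  | insert a V ha ih =>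
    have haWV : a ∉ W ∪ V := by
      simp [ha, Finset.disjoint_right.1 hWV (mem_insert_self a V)]
    have hsub : W ∪ V ⊂ W ∪ insert a V := by
      rw [union_insert]; exact ssubset_insert haWV
    rw [prod_insert ha, mul_assoc, union_insert, set_biInter_insert]
    calc (1 - x a) * ((∏ j ∈ V, (1 - x j)) * μ (⋂ j ∈ W, (A j)ᶜ))
        ≤ (1 - x a) * μ (⋂ j ∈ W ∪ V, (A j)ᶜ) := by
          gcongr
          exact ih (hWV.mono_right (subset_insert a V))
            fun U hU ↦ hcond U (hU.trans_subset hsub.subset)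
      _ ≤ μ ((A a)ᶜ ∩ ⋂ j ∈ W ∪ V, (A j)ᶜ) :=
          mul_measure_le_measure_compl_inter (hA a) (hcond _ hsub a haWV)

lemma measure_inter_biInter_compl_le [IsFiniteMeasure μ] (hA : ∀ i, MeasurableSet (A i))
    (T : ι → Finset ι)
    (hindep : ∀ i, Indep (generateFrom {A i}) (generateFrom (A '' {j | j ≠ i ∧ j ∉ T i})) μ)
    (hx : ∀ i, μ (A i) ≤ x i * ∏ j ∈ T i, (1 - x j)) (S : Finset ι) :
    ∀ i ∉ S, μ (A i ∩ ⋂ j ∈ S, (A j)ᶜ) ≤ x i * μ (⋂ j ∈ S, (A j)ᶜ) := by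
  induction S using Finset.strongInduction with
  | H S ih =>
  intro i hi
  have hpeel := prod_one_sub_mul_le_measure_biInter_compl hA
    (disjoint_sdiff_inter S (T i)) (by rw [sdiff_union_inter]; exact ih)
  rw [sdiff_union_inter] at hpeel
  calc μ (A i ∩ ⋂ j ∈ S, (A j)ᶜ)
      ≤ μ (A i ∩ ⋂ j ∈ S \ T i, (A j)ᶜ) := by
        gcongr μ (A i ∩ ?_)
        exact Set.biInter_subset_biInter_left (coe_subset.2 sdiff_subset)
    _ = μ (A i) * μ (⋂ j ∈ S \ T i, (A j)ᶜ) :=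
        measure_inter_biInter_compl_sdiff_eq_mul hi (hindep i)
    _ ≤ x i * (∏ j ∈ T i, (1 - x j)) * μ (⋂ j ∈ S \ T i, (A j)ᶜ) := by gcongr; exact hx i
    _ ≤ x i * (∏ j ∈ S ∩ T i, (1 - x j)) * μ (⋂ j ∈ S \ T i, (A j)ᶜ) := by
        gcongr x i * ?_ * _
        exact prod_le_prod_of_subset_of_le_one' inter_subset_right fun _ _ _ ↦ tsub_le_self
    _ ≤ x i * μ (⋂ j ∈ S, (A j)ᶜ) := by rw [mul_assoc]; gcongr

theorem prod_one_sub_le_measure_iInter_compl [Fintype ι] [IsProbabilityMeasure μ]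
    (hA : ∀ i, MeasurableSet (A i)) (T : ι → Finset ι)
    (hindep : ∀ i, Indep (generateFrom {A i}) (generateFrom (A '' {j | j ≠ i ∧ j ∉ T i})) μ)
    (hx : ∀ i, μ (A i) ≤ x i * ∏ j ∈ T i, (1 - x j)) :
    ∏ i, (1 - x i) ≤ μ (⋂ i, (A i)ᶜ) := by
  simpa using prod_one_sub_mul_le_measure_biInter_compl hA (disjoint_empty_left univ)
    fun U _ ↦ measure_inter_biInter_compl_le hA T hindep hx U

end LocalLemma

/-- Symmetric Lovász local lemma: if each event has probability at most `p`, each event is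
mutually independent of all but at most `d` of the other events, and `e * p * (d+1) ≤ 1`,
then with positive probability none of the events occurs. -/
theorem symmetric_lovasz_local_lemma {Ω : Type*} [MeasurableSpace Ω]
    (μ : Measure Ω) [IsProbabilityMeasure μ] (N : ℕ)
    (A : Fin N → Set Ω) (hA : ∀ i, MeasurableSet (A i))
    (p : ℝ) (d : ℕ)
    (hp : ∀ i, μ (A i) ≤ ENNReal.ofReal p)
    (hindep : ∀ i : Fin N, ∃ T : Finset (Fin N), T.card ≤ d ∧ i ∉ T ∧
      Indep (MeasurableSpace.generateFrom {A i})
        (MeasurableSpace.generateFrom (A '' {j | j ≠ i ∧ j ∉ T})) μ)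
    (hcond : Real.exp 1 * p * (d + 1) ≤ 1) :
    0 < μ (⋂ i, (A i)ᶜ) := by
  choose T hT using hindep
  set x : ℝ := ((d : ℝ) + 2)⁻¹
  have hx1 : x < 1 := inv_lt_one_of_one_lt₀ (by linarith)
  have hpx : ∀ i, μ (A i) ≤ ENNReal.ofReal x * ∏ _j ∈ T i, (1 - ENNReal.ofReal x) := fun i ↦
    calc μ (A i) ≤ ENNReal.ofReal (x * (1 - x) ^ d) :=
          (hp i).trans (ENNReal.ofReal_le_ofReal (le_inv_mul_one_sub_inv_pow hcond))
      _ = ENNReal.ofReal x * (1 - ENNReal.ofReal x) ^ d := by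
          rw [ENNReal.ofReal_mul (by positivity), ENNReal.ofReal_pow (sub_nonneg.2 hx1.le),
            ENNReal.ofReal_sub _ (by positivity), ENNReal.ofReal_one]
      _ ≤ ENNReal.ofReal x * ∏ _j ∈ T i, (1 - ENNReal.ofReal x) := by
          rw [prod_const]
          gcongr ENNReal.ofReal x * ?_
          exact pow_le_pow_right_of_le_one' tsub_le_self (hT i).1
  refine lt_of_lt_of_le ?_ (prod_one_sub_le_measure_iInter_compl hA T (fun i ↦ (hT i).2.2) hpx)
  rw [prod_const]
  exact ENNReal.pow_pos (tsub_pos_of_lt (ENNReal.ofReal_lt_one.2 hx1)) _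
end
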